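/- arXiv:1505.05418 — 3 statements merged into one kernel-verified Lean document; each statement's English description precedes it below -/
import Mathlib

section
/- Let (x,v):[0,T] → H×H be a strong solution of the system v(t) ∈ ∂φ(x(t)), λ(t)ẋ(t) + v̇(t) + v(t) + ∇ψ(x(t)) = 0 a.e., with x(0)=x₀, v(0)=v₀. If λ(t) ≥ c₀ > 0 on [0,T] and φ+ψ is bounded below on H, then ∫₀ᵀ ‖ẋ(t)‖² dt ≤ (1/c₀)·((φ+ψ)(x₀) − inf_H (φ+ψ)). -/
/-!
Testing the equation against `ẋ` gives `λ ‖ẋ‖² = -⟪v̇, ẋ⟫ - ⟪w, ẋ⟫` with `w = v + ∇ψ(x)`.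
Monotonicity of `∂φ` makes `⟪v̇, ẋ⟫ ≥ 0` a.e., and `w(t)` is a subgradient of `φ + ψ` at `x(t)`, so
`-∫₀ᵀ ⟪w, ẋ⟫` is at most the energy drop `(φ+ψ)(x₀) - (φ+ψ)(x(T))`, itself at most the energy gap.
The last step replaces Brézis's chain rule by Riemann sums: on a fine partition the subgradient
inequality at the right end point of each interval bounds the increment of the energy, and the error
is controlled by the uniform continuity of `w`, which holds because the gradient of a differentiable
convex function is continuous.
-/
open MeasureTheory Set Filter
open scoped Topology

variable {H : Type*} [NormedAddCommGroup H] [InnerProductSpace ℝ H] [CompleteSpace H]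

/-- `v` belongs to the convex subdifferential of `φ` at `x`. -/
def IsSubdiff (φ : H → EReal) (x v : H) : Prop :=
  ∀ y : H, φ x + ((inner ℝ v (y - x) : ℝ) : EReal) ≤ φ y

/-- `φ` is proper, convex and lower semicontinuous. -/
def ProperConvexLSC (φ : H → EReal) : Prop :=
  (∀ z, φ z ≠ ⊥) ∧ (∃ z, φ z ≠ ⊤) ∧ LowerSemicontinuous φ ∧
  (∀ z w : H, ∀ a b : ℝ, 0 ≤ a → 0 ≤ b → a + b = 1 →
      φ (a • z + b • w) ≤ (a : EReal) * φ z + (b : EReal) * φ w)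

/-- Standing assumptions: `φ` proper convex lsc, `ψ` convex with gradient `ψ'`,
and `φ + ψ` bounded below on `H`. -/
def Standing (φ : H → EReal) (ψ : H → ℝ) (ψ' : H → H) : Prop :=
  ProperConvexLSC φ ∧
  ConvexOn ℝ Set.univ ψ ∧ (∀ z, HasGradientAt ψ (ψ' z) z) ∧
  (∃ m : ℝ, ∀ z, (m : EReal) ≤ φ z + (ψ z : EReal))

/-- The energy gap `(φ+ψ)(x₀) - inf_H (φ+ψ)` as a real number. -/
noncomputable def Egap (φ : H → EReal) (ψ : H → ℝ) (x₀ : H) : ℝ :=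
  ((φ x₀ + (ψ x₀ : EReal)) - sInf (Set.range fun z => φ z + (ψ z : EReal))).toReal

/-- `(x, v)` is a strong (absolutely continuous) solution on `[0, T]` of
`v ∈ ∂φ(x)`, `λ ẋ + v̇ + v + ∇ψ(x) = 0` a.e., with a.e. derivatives `x'`, `v'`. -/
structure StrongSol (φ : H → EReal) (ψ' : H → H) (lam : ℝ → ℝ) (T : ℝ)
    (x v x' v' : ℝ → H) : Prop where
  subdiff : ∀ t ∈ Set.Icc (0:ℝ) T, IsSubdiff φ (x t) (v t)
  xint : IntegrableOn x' (Set.Icc 0 T)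
  vint : IntegrableOn v' (Set.Icc 0 T)
  xrep : ∀ t ∈ Set.Icc (0:ℝ) T, x t = x 0 + ∫ s in (0:ℝ)..t, x' s
  vrep : ∀ t ∈ Set.Icc (0:ℝ) T, v t = v 0 + ∫ s in (0:ℝ)..t, v' s
  xderiv : ∀ᵐ t ∂(volume.restrict (Set.Ioo 0 T)), HasDerivAt x (x' t) t
  vderiv : ∀ᵐ t ∂(volume.restrict (Set.Ioo 0 T)), HasDerivAt v (v' t) t
  eqn : ∀ᵐ t ∂(volume.restrict (Set.Ioo 0 T)),
      lam t • x' t + v' t + v t + ψ' (x t) = 0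

open scoped InnerProductSpace

theorem right_le_left_of_forall_le_of_sub_lt {G : ℝ → ℝ} {a b δ : ℝ} (hab : a ≤ b) (hδ : 0 < δ)
    (hG : ∀ s ∈ Icc a b, ∀ t ∈ Icc a b, s ≤ t → t - s < δ → G t ≤ G s) : G b ≤ G a := by
  obtain ⟨n, hn⟩ := exists_nat_gt ((b - a) / δ)
  have hn₀ : (0 : ℝ) < n := lt_of_le_of_lt (by positivity) hn
  set h := (b - a) / n
  have hh : 0 ≤ h := by positivity
  have hhδ : h < δ := by rw [div_lt_iff₀ hn₀]; rwa [div_lt_iff₀ hδ, mul_comm] at hn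
  have hend : a + n * h = b := by simp only [h]; field_simp; ring
  have hmem : ∀ k : ℕ, k ≤ n → a + k * h ∈ Icc a b := fun k hk =>
    ⟨le_add_of_nonneg_right (by positivity), hend ▸ by gcongr⟩
  have hstep : ∀ k : ℕ, k ≤ n → G (a + k * h) ≤ G a := by
    intro k hk
    induction k with
    | zero => simp
    | succ k ih =>
      refine le_trans (hG _ (hmem k (by omega)) _ (hmem (k + 1) hk) ?_ ?_) (ih (by omega))
      · push_cast; linarith
      · push_cast; linarith
  simpa only [hend] using hstep n le_rfl

theorem continuousOn_Icc_of_eq_add_integral {E : Type*} [NormedAddCommGroup E] [NormedSpace ℝ E]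
    [CompleteSpace E] {x x' : ℝ → E} {a b : ℝ} (hab : a ≤ b) (hx' : IntegrableOn x' (Icc a b))
    (hx : ∀ t ∈ Icc a b, x t = x a + ∫ s in a..t, x' s) : ContinuousOn x (Icc a b) := by
  rw [← uIcc_of_le hab] at hx' ⊢
  exact (continuousOn_const.add (intervalIntegral.continuousOn_primitive_interval hx')).congr
    (by rwa [uIcc_of_le hab])

theorem MeasureTheory.IntegrableOn.intervalIntegrable_of_mem_Icc {F : Type*}
    [NormedAddCommGroup F] {f : ℝ → F} {a b s t : ℝ} (hf : IntegrableOn f (Icc a b))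
    (hs : s ∈ Icc a b) (ht : t ∈ Icc a b) : IntervalIntegrable f volume s t :=
  (hf.mono_set (uIcc_subset_Icc hs ht)).intervalIntegrable

theorem intervalIntegral.integral_mono_of_nonneg_ae_Ioo {f g : ℝ → ℝ} {a b : ℝ} (hab : a ≤ b)
    (hf : ∀ᵐ t ∂volume.restrict (Ioo a b), 0 ≤ f t) (hg : IntegrableOn g (Icc a b))
    (h : ∀ᵐ t ∂volume.restrict (Ioo a b), f t ≤ g t) : ∫ t in a..b, f t ≤ ∫ t in a..b, g t := by
  rw [intervalIntegral.integral_of_le hab, intervalIntegral.integral_of_le hab,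
    integral_Ioc_eq_integral_Ioo, integral_Ioc_eq_integral_Ioo]
  exact integral_mono_of_nonneg hf (hg.mono_set Ioo_subset_Icc_self) h

theorem sub_le_toReal_sub_sInf_range {α : Type*} {f : α → EReal} {m : ℝ}
    (hm : ∀ z, (m : EReal) ≤ f z) {x y : α} {a b : ℝ} (hx : f x = a) (hy : f y = b) :
    a - b ≤ (f x - sInf (range f)).toReal := by
  set I := sInf (range f)
  have hIle : I ≤ b := hy ▸ sInf_le ⟨y, rfl⟩
  have hIbot : I ≠ ⊥ := ne_bot_of_le_ne_bot (EReal.coe_ne_bot m) (le_sInf (forall_mem_range.2 hm))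
  have hItop : I ≠ ⊤ := ne_top_of_le_ne_top (EReal.coe_ne_top b) hIle
  rw [hx, ← EReal.coe_toReal hItop hIbot, ← EReal.coe_sub, EReal.toReal_coe]
  have := EReal.toReal_le_toReal hIle hIbot (EReal.coe_ne_top b)
  rw [EReal.toReal_coe] at this
  linarith

section

variable {E : Type*} [NormedAddCommGroup E] [InnerProductSpace ℝ E]

theorem mul_norm_le_of_forall_inner_le {p : E} {δ C : ℝ} (hδ : 0 ≤ δ)
    (h : ∀ u : E, ‖u‖ ≤ δ → ⟪p, u⟫_ℝ ≤ C) : δ * ‖p‖ ≤ C := by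
  have hu : ‖(δ * ‖p‖⁻¹) • p‖ ≤ δ := by
    rw [norm_smul, Real.norm_of_nonneg (by positivity), mul_assoc]
    exact mul_le_of_le_one_right hδ (inv_mul_le_one_of_le₀ le_rfl (norm_nonneg p))
  have := h _ hu
  rw [real_inner_smul_right, real_inner_self_eq_norm_sq] at this
  rcases eq_or_ne ‖p‖ 0 with hp | hp
  · simpa [hp] using this
  · convert this using 1; field_simp

theorem mul_norm_sq_le_neg_inner_of_add_eq_zero {a c : ℝ} {p q r : E} (hca : c ≤ a)
    (hq : 0 ≤ ⟪q, p⟫_ℝ) (h : a • p + q + r = 0) : c * ‖p‖ ^ 2 ≤ -⟪r, p⟫_ℝ := by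
  have h' := congrArg (fun z => ⟪z, p⟫_ℝ) h
  simp only [inner_add_left, real_inner_smul_left, real_inner_self_eq_norm_sq,
    inner_zero_left] at h'
  nlinarith [mul_le_mul_of_nonneg_right hca (sq_nonneg ‖p‖)]

theorem inner_nonneg_of_hasDerivAt {x v : ℝ → E} {x' v' : E} {t : ℝ}
    (hx : HasDerivAt x x' t) (hv : HasDerivAt v v' t)
    (hmono : ∀ᶠ u in 𝓝 t, 0 ≤ ⟪v u - v t, x u - x t⟫_ℝ) : 0 ≤ ⟪v', x'⟫_ℝ := by
  refine ge_of_tendsto ((hasDerivAt_iff_tendsto_slope.1 hv).inner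
    (hasDerivAt_iff_tendsto_slope.1 hx)) ?_
  filter_upwards [nhdsWithin_le_nhds hmono] with u hu
  rw [slope_def_module, slope_def_module, real_inner_smul_left, real_inner_smul_right, ← mul_assoc]
  exact mul_nonneg (mul_self_nonneg _) hu

theorem integrableOn_inner_of_continuousOn {w x' : ℝ → E} {a b : ℝ}
    (hw : ContinuousOn w (Icc a b)) (hx' : IntegrableOn x' (Icc a b)) :
    IntegrableOn (fun t => ⟪w t, x' t⟫_ℝ) (Icc a b) := by
  obtain ⟨M, hM⟩ := isCompact_Icc.exists_bound_of_continuousOn hw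
  exact (innerSL ℝ).integrable_of_bilin_of_bdd_left M
    (hw.aestronglyMeasurable measurableSet_Icc)
    ((ae_restrict_mem measurableSet_Icc).mono hM) hx'

theorem integral_inner_le_of_norm_sub_le {c : E} {w x' : ℝ → E} {s t ε : ℝ} (hst : s ≤ t)
    (hx' : IntervalIntegrable x' volume s t)
    (hwx' : IntervalIntegrable (fun u => ⟪w u, x' u⟫_ℝ) volume s t)
    (hc : ∀ u ∈ Icc s t, ‖c - w u‖ ≤ ε) :
    ∫ u in s..t, ⟪c, x' u⟫_ℝ ≤ ∫ u in s..t, (⟪w u, x' u⟫_ℝ + ε * ‖x' u‖) := by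
  refine intervalIntegral.integral_mono_on hst
    ⟨Integrable.const_inner c hx'.1, Integrable.const_inner c hx'.2⟩
    (hwx'.add (hx'.norm.const_mul ε)) fun u hu => ?_
  calc ⟪c, x' u⟫_ℝ = ⟪w u, x' u⟫_ℝ + ⟪c - w u, x' u⟫_ℝ := by rw [inner_sub_left]; ring
    _ ≤ ⟪w u, x' u⟫_ℝ + ‖c - w u‖ * ‖x' u‖ := by gcongr; exact real_inner_le_norm _ _
    _ ≤ ⟪w u, x' u⟫_ℝ + ε * ‖x' u‖ := by gcongr; exact hc u hu

variable [CompleteSpace E]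

theorem ConvexOn.add_inner_le_of_hasGradientAt {ψ : E → ℝ} (hψ : ConvexOn ℝ univ ψ) {g z : E}
    (hg : HasGradientAt ψ g z) (y : E) : ψ z + ⟪g, y - z⟫_ℝ ≤ ψ y := by
  have hderiv : HasDerivAt (ψ ∘ AffineMap.lineMap (k := ℝ) z y) ⟪g, y - z⟫_ℝ 0 := by
    have hg' : HasFDerivAt ψ (InnerProductSpace.toDual ℝ E g) (AffineMap.lineMap z y (0:ℝ)) := by
      simpa using hg.hasFDerivAt
    simpa using hg'.comp_hasDerivAt (0:ℝ) AffineMap.hasDerivAt_lineMap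
  have := (hψ.comp_affineMap _).le_slope_of_hasDerivAt (mem_univ 0) (mem_univ 1) one_pos hderiv
  simp only [slope, sub_zero, inv_one, Function.comp_apply, AffineMap.lineMap_apply_one,
    AffineMap.lineMap_apply_zero, vsub_eq_sub, smul_eq_mul, one_mul] at this
  linarith

theorem ConvexOn.continuous_of_hasGradientAt {ψ : E → ℝ} {ψ' : E → E} (hψ : ConvexOn ℝ univ ψ)
    (hgrad : ∀ z, HasGradientAt ψ (ψ' z) z) : Continuous ψ' := by
  refine Metric.continuous_iff.2 fun z₀ ε hε => ?_
  -- The gradient inequalities at `z` and at `z₀` bound `⟪ψ' z - ψ' z₀, u⟫` by the first-order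
  -- remainder of `ψ` at `z₀`, which is `o(‖z - z₀ + u‖)`.
  have hbregman : ∀ z u, ⟪ψ' z - ψ' z₀, u⟫_ℝ ≤
      ψ (z₀ + (z - z₀ + u)) - ψ z₀ - ⟪ψ' z₀, z - z₀ + u⟫_ℝ := by
    intro z u
    have h₁ := hψ.add_inner_le_of_hasGradientAt (hgrad z) (z + u)
    have h₂ := hψ.add_inner_le_of_hasGradientAt (hgrad z₀) z
    rw [add_sub_cancel_left] at h₁
    rw [show z₀ + (z - z₀ + u) = z + u by abel, inner_add_right, inner_sub_left]
    linarith
  obtain ⟨ρ, hρ, hsmall⟩ := Metric.eventually_nhds_iff.1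
    ((hasGradientAt_iff_isLittleO_nhds_zero.1 (hgrad z₀)).def (by positivity : 0 < ε / 4))
  refine ⟨ρ / 2, half_pos hρ, fun z hz => ?_⟩
  rw [dist_eq_norm] at hz ⊢
  have hbound : ρ / 2 * ‖ψ' z - ψ' z₀‖ ≤ ε / 4 * ρ := by
    refine mul_norm_le_of_forall_inner_le (half_pos hρ).le fun u hu => ?_
    have hk : ‖z - z₀ + u‖ < ρ := (norm_add_le _ _).trans_lt (by linarith)
    have := hsmall (y := z - z₀ + u) (by rwa [dist_zero_right])
    rw [Real.norm_eq_abs] at this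
    calc ⟪ψ' z - ψ' z₀, u⟫_ℝ ≤ _ := hbregman z u
      _ ≤ ε / 4 * ‖z - z₀ + u‖ := (le_abs_self _).trans this
      _ ≤ ε / 4 * ρ := by gcongr
  nlinarith

variable {F : ℝ → ℝ} {x x' w : ℝ → E} {a b : ℝ}

theorem sub_le_integral_inner_add_mul_integral_norm (hab : a ≤ b)
    (hx' : IntegrableOn x' (Icc a b)) (hx : ∀ t ∈ Icc a b, x t = x a + ∫ s in a..t, x' s)
    (hw : ContinuousOn w (Icc a b))
    (hF : ∀ s ∈ Icc a b, ∀ t ∈ Icc a b, s ≤ t → F t + ⟪w t, x s - x t⟫_ℝ ≤ F s)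
    {ε : ℝ} (hε : 0 < ε) :
    F b - F a ≤ (∫ t in a..b, ⟪w t, x' t⟫_ℝ) + ε * ∫ t in a..b, ‖x' t‖ := by
  have hwx' := integrableOn_inner_of_continuousOn hw hx'
  have hg : IntegrableOn (fun u => ⟪w u, x' u⟫_ℝ + ε * ‖x' u‖) (Icc a b) :=
    hwx'.add (hx'.norm.const_mul ε)
  have ha : a ∈ Icc a b := left_mem_Icc.2 hab
  have hb : b ∈ Icc a b := right_mem_Icc.2 hab
  obtain ⟨δ, hδ, hwδ⟩ := Metric.uniformContinuousOn_iff.1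
    (isCompact_Icc.uniformContinuousOn_of_continuous hw) ε hε
  have hlocal : ∀ s ∈ Icc a b, ∀ t ∈ Icc a b, s ≤ t → t - s < δ →
      F t - ∫ u in a..t, (⟪w u, x' u⟫_ℝ + ε * ‖x' u‖) ≤
        F s - ∫ u in a..s, (⟪w u, x' u⟫_ℝ + ε * ‖x' u‖) := by
    intro s hs t ht hst htδ
    have hinner : ⟪w t, x t - x s⟫_ℝ = ∫ u in s..t, ⟪w t, x' u⟫_ℝ := by
      rw [hx t ht, hx s hs, add_sub_add_left_eq_sub, intervalIntegral.integral_interval_sub_left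
        (hx'.intervalIntegrable_of_mem_Icc ha ht) (hx'.intervalIntegrable_of_mem_Icc ha hs)]
      exact ((innerSL ℝ (w t)).intervalIntegral_comp_comm
        (hx'.intervalIntegrable_of_mem_Icc hs ht)).symm
    have hfreeze := integral_inner_le_of_norm_sub_le hst
      (hx'.intervalIntegrable_of_mem_Icc hs ht) (hwx'.intervalIntegrable_of_mem_Icc hs ht)
      fun u hu => by
        rw [← dist_eq_norm]
        refine (hwδ t ht u (Icc_subset_Icc hs.1 ht.2 hu) ?_).le
        rw [Real.dist_eq, abs_lt]
        constructor <;> linarith [hu.1, hu.2]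
    have hsub := hF s hs t ht hst
    rw [← neg_sub, inner_neg_right] at hsub
    linarith [intervalIntegral.integral_interval_sub_left
      (hg.intervalIntegrable_of_mem_Icc ha ht) (hg.intervalIntegrable_of_mem_Icc ha hs)]
  have := right_le_left_of_forall_le_of_sub_lt hab hδ hlocal
  rw [intervalIntegral.integral_same, intervalIntegral.integral_add
    (hwx'.intervalIntegrable_of_mem_Icc ha hb)
    (IntegrableOn.intervalIntegrable_of_mem_Icc (hx'.norm.const_mul ε) ha hb),
    intervalIntegral.integral_const_mul] at this
  linarith

theorem sub_le_integral_inner_of_add_inner_le (hab : a ≤ b)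
    (hx' : IntegrableOn x' (Icc a b)) (hx : ∀ t ∈ Icc a b, x t = x a + ∫ s in a..t, x' s)
    (hw : ContinuousOn w (Icc a b))
    (hF : ∀ s ∈ Icc a b, ∀ t ∈ Icc a b, s ≤ t → F t + ⟪w t, x s - x t⟫_ℝ ≤ F s) :
    F b - F a ≤ ∫ t in a..b, ⟪w t, x' t⟫_ℝ := by
  have hlim : Tendsto (fun ε => (∫ t in a..b, ⟪w t, x' t⟫_ℝ) + ε * ∫ t in a..b, ‖x' t‖)
      (𝓝[>] 0) (𝓝 (∫ t in a..b, ⟪w t, x' t⟫_ℝ)) :=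
    ((continuous_const.add (continuous_mul_const _)).tendsto' 0 _ (by simp)).mono_left
      nhdsWithin_le_nhds
  exact ge_of_tendsto hlim (eventually_nhdsWithin_of_forall fun ε hε =>
    sub_le_integral_inner_add_mul_integral_norm hab hx' hx hw hF hε)

end

namespace IsSubdiff

variable {E : Type*} [NormedAddCommGroup E] [InnerProductSpace ℝ E] {φ : E → EReal} {x v : E}

theorem ne_top (h : IsSubdiff φ x v) {z : E} (hz : φ z ≠ ⊤) : φ x ≠ ⊤ := by
  intro hx
  have := h z
  rw [hx, EReal.top_add_coe, top_le_iff] at this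
  exact hz this

theorem add_inner_le (h : IsSubdiff φ x v) {y : E} {a b : ℝ} (hx : φ x = a) (hy : φ y = b) :
    a + ⟪v, y - x⟫_ℝ ≤ b := by
  have := h y
  rw [hx, hy] at this
  exact_mod_cast this

theorem inner_sub_nonneg (h : IsSubdiff φ x v) {y u : E} (h' : IsSubdiff φ y u) {a b : ℝ}
    (hx : φ x = a) (hy : φ y = b) : 0 ≤ ⟪v - u, x - y⟫_ℝ := by
  have h₁ := h.add_inner_le hx hy
  have h₂ := h'.add_inner_le hy hx
  rw [← neg_sub x y, inner_neg_right] at h₁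
  rw [inner_sub_left]
  linarith

theorem add_hasGradientAt [CompleteSpace E] (h : IsSubdiff φ x v) {ψ : E → ℝ} {g : E}
    (hψ : ConvexOn ℝ univ ψ) (hg : HasGradientAt ψ g x) :
    IsSubdiff (fun z => φ z + ψ z) x (v + g) := by
  intro y
  have hψy : ((ψ x + ⟪g, y - x⟫_ℝ : ℝ) : EReal) ≤ ψ y :=
    EReal.coe_le_coe_iff.2 (hψ.add_inner_le_of_hasGradientAt hg y)
  calc φ x + ψ x + ((⟪v + g, y - x⟫_ℝ : ℝ) : EReal)
      = (φ x + ⟪v, y - x⟫_ℝ) + ((ψ x + ⟪g, y - x⟫_ℝ : ℝ) : EReal) := by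
        rw [inner_add_left]; push_cast; abel
    _ ≤ φ y + ψ y := add_le_add (h y) hψy

end IsSubdiff

theorem StrongSol.inner_deriv_nonneg {E : Type*} [NormedAddCommGroup E] [InnerProductSpace ℝ E]
    {φ : E → EReal} {ψ' : E → E} {lam : ℝ → ℝ} {T : ℝ} {x v x' v' : ℝ → E}
    (sol : StrongSol φ ψ' lam T x v x' v')
    (hφ : ∀ t ∈ Icc 0 T, φ (x t) = (φ (x t)).toReal) :
    ∀ᵐ t ∂volume.restrict (Ioo 0 T), 0 ≤ ⟪v' t, x' t⟫_ℝ := by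
  filter_upwards [sol.xderiv, sol.vderiv, ae_restrict_mem measurableSet_Ioo] with t hxt hvt ht
  refine inner_nonneg_of_hasDerivAt hxt hvt ?_
  filter_upwards [Icc_mem_nhds ht.1 ht.2] with u hu
  have htT : t ∈ Icc 0 T := Ioo_subset_Icc_self ht
  exact (sol.subdiff u hu).inner_sub_nonneg (sol.subdiff t htT) (hφ u hu) (hφ t htT)

theorem stmt1_general (φ : H → EReal) (ψ : H → ℝ) (ψ' : H → H) (hst : Standing φ ψ ψ')
    (lam : ℝ → ℝ) (T c₀ : ℝ) (hT : 0 < T) (hc₀ : 0 < c₀)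
    (hlam : ∀ t ∈ Set.Icc (0:ℝ) T, c₀ ≤ lam t)
    (x v x' v' : ℝ → H) (x₀ : H) (hx0 : x 0 = x₀)
    (sol : StrongSol φ ψ' lam T x v x' v') :
    ∫ t in (0:ℝ)..T, ‖x' t‖ ^ 2 ≤ (1 / c₀) * Egap φ ψ x₀ := by
  obtain ⟨⟨hbot, ⟨z₀, hz₀⟩, -, -⟩, hψ, hgrad, ⟨m, hm⟩⟩ := hst
  set w : ℝ → H := fun t => v t + ψ' (x t)
  set e : ℝ → ℝ := fun t => (φ (x t)).toReal + ψ (x t)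
  have hφ : ∀ t ∈ Icc 0 T, φ (x t) = (φ (x t)).toReal := fun t ht =>
    (EReal.coe_toReal ((sol.subdiff t ht).ne_top hz₀) (hbot _)).symm
  have he : ∀ t ∈ Icc 0 T, φ (x t) + ψ (x t) = e t := fun t ht => by rw [hφ t ht]; rfl
  have hw : ContinuousOn w (Icc 0 T) :=
    (continuousOn_Icc_of_eq_add_integral hT.le sol.vint sol.vrep).add
      ((hψ.continuous_of_hasGradientAt hgrad).comp_continuousOn
        (continuousOn_Icc_of_eq_add_integral hT.le sol.xint sol.xrep))
  have hdiss : e T - e 0 ≤ ∫ t in (0:ℝ)..T, ⟪w t, x' t⟫_ℝ :=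
    sub_le_integral_inner_of_add_inner_le hT.le sol.xint sol.xrep hw fun s hs t ht _ =>
      ((sol.subdiff t ht).add_hasGradientAt hψ (hgrad _)).add_inner_le (he t ht) (he s hs)
  have hgap : e 0 - e T ≤ Egap φ ψ x₀ := by
    have := sub_le_toReal_sub_sInf_range hm (he 0 (left_mem_Icc.2 hT.le))
      (he T (right_mem_Icc.2 hT.le))
    rwa [hx0] at this
  have hbound : ∫ t in (0:ℝ)..T, c₀ * ‖x' t‖ ^ 2 ≤ ∫ t in (0:ℝ)..T, -⟪w t, x' t⟫_ℝ := by
    refine intervalIntegral.integral_mono_of_nonneg_ae_Ioo hT.le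
      (ae_of_all _ fun t => by positivity) (integrableOn_inner_of_continuousOn hw sol.xint).neg ?_
    filter_upwards [sol.eqn, sol.inner_deriv_nonneg hφ, ae_restrict_mem measurableSet_Ioo]
      with t heq hmono ht
    exact mul_norm_sq_le_neg_inner_of_add_eq_zero (hlam t (Ioo_subset_Icc_self ht)) hmono
      (by rwa [← add_assoc])
  rw [intervalIntegral.integral_const_mul, intervalIntegral.integral_neg] at hbound
  rw [one_div, ← div_eq_inv_mul, le_div_iff₀ hc₀, mul_comm]
  linarith

theorem stmt1 (φ : H → EReal) (ψ : H → ℝ) (ψ' : H → H) (hst : Standing φ ψ ψ')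
    (lam : ℝ → ℝ) (T c₀ : ℝ) (hT : 0 < T) (hc₀ : 0 < c₀)
    (hlam : ∀ t ∈ Set.Icc (0:ℝ) T, c₀ ≤ lam t)
    (x v x' v' : ℝ → H) (x₀ v₀ : H) (hx0 : x 0 = x₀) (hv0 : v 0 = v₀)
    (hv₀ : IsSubdiff φ x₀ v₀)
    (sol : StrongSol φ ψ' lam T x v x' v') :
    ∫ t in (0:ℝ)..T, ‖x' t‖ ^ 2 ≤ (1 / c₀) * Egap φ ψ x₀ :=
  stmt1_general φ ψ ψ' hst lam T c₀ hT hc₀ hlam x v x' v' x₀ hx0 sol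
end

section
/- Let (x,v) be a strong solution on [0,T] of v ∈ ∂φ(x), λẋ + v̇ + v + ∇ψ(x) = 0 a.e. with λ ≥ c₀ > 0, and suppose ∇ψ is globally L_ψ-Lipschitz. Then ∫₀ᵀ ‖v̇(t)‖² dt ≤ ‖v₀‖² + 2T‖∇ψ(x₀)‖² + (2T²L_ψ²/c₀)·((φ+ψ)(x₀) − inf_H (φ+ψ)). -/
open MeasureTheory Set Filter
open scoped Topology

variable {H : Type*} [NormedAddCommGroup H] [InnerProductSpace ℝ H] [CompleteSpace H]

/-!
Testing the equation with `ẋ` and using `⟪ẋ, v̇⟫ ≥ 0` (monotonicity of `∂φ`) shows that `φ + ψ`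
decreases along the solution at rate at least `c₀ ‖ẋ‖²`, so `∫ ‖ẋ‖² ≤ Egap / c₀`. By Cauchy–Schwarz
this gives `‖x t - x₀‖² ≤ T · Egap / c₀`, which controls `‖∇ψ (x t)‖²` through the Lipschitz bound.
Testing with `v̇` and Young's inequality gives `∫ ‖v̇‖² ≤ ‖v₀‖² + ∫ ‖∇ψ (x t)‖²`.

Since `φ ∘ x` need not be differentiable, both energy identities are used only as inequalities:
if `F t - F s ≤ ⟪w t, u t - u s⟫` for `s ≤ t` with `w` continuous and `u` absolutely continuous,
then `F b - F a ≤ ∫ ⟪w, u̇⟫`: on steps shorter than a modulus of uniform continuity of `w` for `ε`,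
the error is at most `ε ∫ ‖u̇‖`.
-/

open intervalIntegral
open scoped RealInnerProductSpace

theorem le_of_forall_le_of_le_add {f : ℝ → ℝ} {a b δ : ℝ} (hab : a ≤ b) (hδ : 0 < δ)
    (h : ∀ s ∈ Icc a b, ∀ t ∈ Icc a b, s ≤ t → t ≤ s + δ → f t ≤ f s) : f b ≤ f a := by
  have key : ∀ n : ℕ, ∀ t ∈ Icc a b, t ≤ a + n * δ → f t ≤ f a := by
    intro n
    induction n with
    | zero => intro t ht h0; rw [le_antisymm (by simpa using h0) ht.1]
    | succ n ih =>
      intro t ht htn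
      set s := max a (t - δ)
      have hs : s ∈ Icc a b := ⟨le_max_left _ _, max_le hab (by linarith [ht.2])⟩
      refine (h s hs t ht (max_le ht.1 (by linarith)) (by linarith [le_max_right a (t - δ)])).trans
        (ih s hs ?_)
      push_cast at htn
      exact max_le (by nlinarith [n.cast_nonneg (α := ℝ)]) (by linarith)
  obtain ⟨n, hn⟩ := exists_nat_ge ((b - a) / δ)
  exact key n b ⟨hab, le_rfl⟩ (by rw [div_le_iff₀ hδ] at hn; linarith)

theorem sq_integral_le_mul_integral_sq {f : ℝ → ℝ} {a b : ℝ} (hab : a ≤ b)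
    (hf : IntervalIntegrable f volume a b)
    (hf2 : IntervalIntegrable (fun t => f t ^ 2) volume a b) :
    (∫ t in a..b, f t) ^ 2 ≤ (b - a) * ∫ t in a..b, f t ^ 2 := by
  have hquad : ∀ c : ℝ,
      0 ≤ (b - a) * (c * c) + (-2 * ∫ t in a..b, f t) * c + ∫ t in a..b, f t ^ 2 := fun c => by
    have hexp : ∫ t in a..b, (f t - c) ^ 2 = ∫ t in a..b, f t ^ 2 - (2 * c) * f t + c ^ 2 :=
      integral_congr fun t _ => by ring
    have : 0 ≤ ∫ t in a..b, (f t - c) ^ 2 := integral_nonneg hab fun t _ => sq_nonneg _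
    rw [hexp, integral_add (hf2.sub (hf.const_mul _)) intervalIntegrable_const,
      integral_sub hf2 (hf.const_mul _), intervalIntegral.integral_const_mul,
      intervalIntegral.integral_const, smul_eq_mul] at this
    nlinarith
  have := discrim_le_zero hquad
  rw [discrim] at this
  linarith

theorem toReal_add_sub_le_Egap {α : Type*} {φ : α → EReal} {ψ : α → ℝ} {x₀ y : α}
    (hbdd : ∃ m : ℝ, ∀ z, (m : EReal) ≤ φ z + (ψ z : EReal)) (hbot : ∀ z, φ z ≠ ⊥)
    (hx₀ : φ x₀ ≠ ⊤) (hy : φ y ≠ ⊤) :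
    (φ x₀).toReal + ψ x₀ - ((φ y).toReal + ψ y) ≤ Egap φ ψ x₀ := by
  obtain ⟨m, hm⟩ := hbdd
  have hmS : (m : EReal) ≤ sInf (range fun z => φ z + (ψ z : EReal)) :=
    le_sInf (by rintro - ⟨z, rfl⟩; exact hm z)
  have hSy : sInf (range fun z => φ z + (ψ z : EReal)) ≤ φ y + ψ y := sInf_le (mem_range_self y)
  obtain ⟨a, ha⟩ : ∃ a : ℝ, φ x₀ = a := ⟨_, (EReal.coe_toReal hx₀ (hbot x₀)).symm⟩
  obtain ⟨b, hb⟩ : ∃ b : ℝ, φ y = b := ⟨_, (EReal.coe_toReal hy (hbot y)).symm⟩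
  rw [hb, ← EReal.coe_add] at hSy
  obtain ⟨s, hs⟩ : ∃ s : ℝ, sInf (range fun z => φ z + (ψ z : EReal)) = s :=
    ⟨_, (EReal.coe_toReal (ne_top_of_le_ne_top (EReal.coe_ne_top _) hSy)
      (ne_bot_of_le_ne_bot (EReal.coe_ne_bot m) hmS)).symm⟩
  rw [hs, EReal.coe_le_coe_iff] at hSy
  rw [Egap, hs, ha, hb, ← EReal.coe_add, ← EReal.coe_sub]
  simp only [EReal.toReal_coe]
  linarith

section Normed

variable {E : Type*} [NormedAddCommGroup E]

theorem IntegrableOn.norm_sq_of_ae_mul_norm_le {u p : ℝ → E} {a b c : ℝ} (hc : 0 < c)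
    (hu : IntegrableOn u (Icc a b)) (hp : ContinuousOn p (Icc a b))
    (h : ∀ᵐ t ∂volume.restrict (Icc a b), c * ‖u t‖ ≤ ‖p t‖) :
    IntegrableOn (fun t => ‖u t‖ ^ 2) (Icc a b) := by
  obtain ⟨M, hM⟩ := isCompact_Icc.exists_bound_of_continuousOn hp
  refine (hu.norm.const_mul (M / c)).mono' (hu.aestronglyMeasurable.norm.pow 2) ?_
  filter_upwards [h, ae_restrict_mem measurableSet_Icc] with t ht htI
  have hut : ‖u t‖ ≤ M / c := by rw [le_div_iff₀ hc, mul_comm]; exact ht.trans (hM t htI)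
  rw [norm_pow, norm_norm, sq]
  exact mul_le_mul_of_nonneg_right hut (norm_nonneg _)

theorem integral_norm_sq_comp_le {F : Type*} [NormedAddCommGroup F] {g : E → F} {u : ℝ → E}
    {a b L K : ℝ} (hab : a ≤ b) (hu : ContinuousOn u (Icc a b))
    (hlip : ∀ y z, ‖g y - g z‖ ≤ L * ‖y - z‖) (hK : ∀ t ∈ Icc a b, ‖u t - u a‖ ^ 2 ≤ K) :
    ∫ t in a..b, ‖g (u t)‖ ^ 2 ≤ (b - a) * (2 * ‖g (u a)‖ ^ 2 + 2 * L ^ 2 * K) := by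
  have hg : Continuous g :=
    (LipschitzWith.of_dist_le' (K := L) fun y z => by
      simpa only [dist_eq_norm] using hlip y z).continuous
  have hpt : ∀ t ∈ Icc a b, ‖g (u t)‖ ^ 2 ≤ 2 * ‖g (u a)‖ ^ 2 + 2 * L ^ 2 * K := by
    intro t ht
    have h₁ := norm_le_norm_add_norm_sub' (g (u t)) (g (u a))
    have h₂ : ‖g (u t) - g (u a)‖ ^ 2 ≤ L ^ 2 * ‖u t - u a‖ ^ 2 := by
      rw [← mul_pow]
      exact pow_le_pow_left₀ (norm_nonneg _) (hlip _ _) 2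
    nlinarith [hK t ht, sq_nonneg (‖g (u a)‖ - ‖g (u t) - g (u a)‖), norm_nonneg (g (u t))]
  have hint : IntervalIntegrable (fun t => ‖g (u t)‖ ^ 2) volume a b :=
    ((hg.comp_continuousOn hu).norm.pow 2).intervalIntegrable_of_Icc hab
  have := integral_mono_on hab hint intervalIntegrable_const hpt
  rwa [intervalIntegral.integral_const, smul_eq_mul] at this

section AbsolutelyContinuous

variable [NormedSpace ℝ E] {u u' : ℝ → E} {a b : ℝ}

theorem continuousOn_of_eq_add_integral (hu' : IntegrableOn u' (Icc a b))
    (hu : ∀ t ∈ Icc a b, u t = u a + ∫ r in a..t, u' r) : ContinuousOn u (Icc a b) :=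
  (continuousOn_const.add ((continuousOn_primitive hu').congr fun _ ht =>
    integral_of_le ht.1)).congr hu

theorem integral_eq_sub_of_eq_add_integral {s t : ℝ} (hu' : IntegrableOn u' (Icc a b))
    (hu : ∀ t ∈ Icc a b, u t = u a + ∫ r in a..t, u' r) (hs : s ∈ Icc a b) (ht : t ∈ Icc a b) :
    ∫ r in s..t, u' r = u t - u s := by
  have hint : ∀ c ∈ Icc a b, IntervalIntegrable u' volume a c := fun c hc =>
    (hu'.mono_set (uIcc_subset_Icc ⟨le_rfl, hc.1.trans hc.2⟩ hc)).intervalIntegrable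
  rw [hu t ht, hu s hs, add_sub_add_left_eq_sub,
    integral_interval_sub_left (hint t ht) (hint s hs)]

theorem norm_sub_sq_le_mul_integral_norm_sq {t : ℝ} (hu' : IntegrableOn u' (Icc a b))
    (hu : ∀ t ∈ Icc a b, u t = u a + ∫ r in a..t, u' r)
    (hsq : IntegrableOn (fun r => ‖u' r‖ ^ 2) (Icc a b)) (ht : t ∈ Icc a b) :
    ‖u t - u a‖ ^ 2 ≤ (b - a) * ∫ r in a..b, ‖u' r‖ ^ 2 := by
  have hsub : ∀ {f : ℝ → ℝ}, IntegrableOn f (Icc a b) → IntervalIntegrable f volume a t :=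
    fun hf => (hf.mono_set (uIcc_subset_Icc ⟨le_rfl, ht.1.trans ht.2⟩ ht)).intervalIntegrable
  have hnorm : ‖u t - u a‖ ≤ ∫ r in a..t, ‖u' r‖ := by
    rw [hu t ht, add_sub_cancel_left]
    exact norm_integral_le_integral_norm ht.1
  have hmono : ∫ r in a..t, ‖u' r‖ ^ 2 ≤ ∫ r in a..b, ‖u' r‖ ^ 2 :=
    integral_mono_interval le_rfl ht.1 ht.2 (Eventually.of_forall fun _ => sq_nonneg _)
      (hsq.mono_set (uIcc_subset_Icc ⟨le_rfl, ht.1.trans ht.2⟩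
        ⟨ht.1.trans ht.2, le_rfl⟩)).intervalIntegrable
  calc ‖u t - u a‖ ^ 2 ≤ (∫ r in a..t, ‖u' r‖) ^ 2 := pow_le_pow_left₀ (norm_nonneg _) hnorm 2
    _ ≤ (t - a) * ∫ r in a..t, ‖u' r‖ ^ 2 :=
      sq_integral_le_mul_integral_sq ht.1 (hsub hu'.norm) (hsub hsq)
    _ ≤ (b - a) * ∫ r in a..b, ‖u' r‖ ^ 2 :=
      mul_le_mul (by linarith [ht.2]) hmono (integral_nonneg ht.1 fun _ _ => sq_nonneg _)
        (by linarith [ht.1, ht.2])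

end AbsolutelyContinuous

end Normed

section InnerProductSpace

variable {E : Type*} [NormedAddCommGroup E] [InnerProductSpace ℝ E]

theorem ConvexOn.inner_gradient_le_sub [CompleteSpace E] {ψ : E → ℝ} (hψ : ConvexOn ℝ univ ψ)
    {g x : E} (hg : HasGradientAt ψ g x) (y : E) : ⟪g, y - x⟫ ≤ ψ y - ψ x := by
  let ℓ : ℝ →ᵃ[ℝ] E := AffineMap.lineMap x y
  have hℓ : ConvexOn ℝ univ (ψ ∘ ℓ) := by simpa using hψ.comp_affineMap ℓ
  have hg' : HasFDerivAt ψ (InnerProductSpace.toDual ℝ E g) (ℓ 0) := by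
    simpa [ℓ] using hg.hasFDerivAt
  have hderiv : HasDerivAt (ψ ∘ ℓ) ⟪g, y - x⟫ 0 := by
    simpa [ℓ] using hg'.comp_hasDerivAt (0:ℝ) (AffineMap.hasDerivAt_lineMap (a := x) (b := y))
  simpa [ℓ, slope_def_field] using
    hℓ.le_slope_of_hasDerivAt (mem_univ 0) (mem_univ 1) one_pos hderiv

section Subdifferential

variable {φ : E → EReal} {x y z v w : E}

theorem IsSubdiff.ne_top_s3 (h : IsSubdiff φ x v) (hz : φ z ≠ ⊤) : φ x ≠ ⊤ := by
  intro hx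
  have := h z
  rw [hx, EReal.top_add_of_ne_bot (EReal.coe_ne_bot _), top_le_iff] at this
  exact hz this

theorem IsSubdiff.toReal_add_inner_le (h : IsSubdiff φ x v) (hx : φ x ≠ ⊥) (hy : φ y ≠ ⊤) :
    (φ x).toReal + ⟪v, y - x⟫ ≤ (φ y).toReal := by
  have hy' : φ y ≠ ⊥ := fun hy' => by
    have := h y
    rw [hy', le_bot_iff, ← EReal.coe_toReal (h.ne_top_s3 hy) hx, ← EReal.coe_add] at this
    exact EReal.coe_ne_bot _ this
  have := h y
  rwa [← EReal.coe_toReal (h.ne_top_s3 hy) hx, ← EReal.coe_toReal hy hy', ← EReal.coe_add,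
    EReal.coe_le_coe_iff] at this

theorem IsSubdiff.inner_sub_nonneg_s3 (hbot : ∀ z, φ z ≠ ⊥) (hz : φ z ≠ ⊤) (hx : IsSubdiff φ x v)
    (hy : IsSubdiff φ y w) : 0 ≤ ⟪x - y, v - w⟫ := by
  have h₁ := hx.toReal_add_inner_le (hbot x) (hy.ne_top_s3 hz)
  have h₂ := hy.toReal_add_inner_le (hbot y) (hx.ne_top_s3 hz)
  have : ⟪x - y, v - w⟫ = -⟪v, y - x⟫ - ⟪w, x - y⟫ := by
    simp only [inner_sub_left, inner_sub_right, real_inner_comm]; ring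
  linarith

end Subdifferential

theorem HasDerivAt.inner_nonneg_of_eventually {x v : ℝ → E} {x' v' : E} {t : ℝ}
    (hx : HasDerivAt x x' t) (hv : HasDerivAt v v' t)
    (h : ∀ᶠ r in 𝓝 t, 0 ≤ ⟪x r - x t, v r - v t⟫) : 0 ≤ ⟪x', v'⟫ := by
  refine ge_of_tendsto ((hasDerivAt_iff_tendsto_slope.1 hx).inner
    (hasDerivAt_iff_tendsto_slope.1 hv)) ?_
  filter_upwards [nhdsWithin_le_nhds h] with r hr
  rw [slope_def_module, slope_def_module, real_inner_smul_left, real_inner_smul_right,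
    ← mul_assoc]
  exact mul_nonneg (mul_self_nonneg _) hr

theorem mul_norm_le_of_mul_norm_sq_add_inner_nonpos {c : ℝ} {a p : E}
    (h : c * ‖a‖ ^ 2 + ⟪p, a⟫ ≤ 0) : c * ‖a‖ ≤ ‖p‖ := by
  rcases (norm_nonneg a).eq_or_lt with ha | ha
  · rw [← ha, mul_zero]
    exact norm_nonneg _
  · have := neg_le_of_abs_le (abs_real_inner_le_norm p a)
    exact le_of_mul_le_mul_right (by nlinarith) ha

theorem norm_sq_div_two_add_inner_le {b v g : E} (h : ‖b‖ ^ 2 + ⟪v + g, b⟫ ≤ 0) :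
    ‖b‖ ^ 2 / 2 + ⟪v, b⟫ ≤ ‖g‖ ^ 2 / 2 := by
  have := neg_le_of_abs_le (abs_real_inner_le_norm g b)
  rw [inner_add_left] at h
  nlinarith [sq_nonneg (‖g‖ - ‖b‖)]

section Equation

variable {lam : ℝ} {a b v g : E} (heq : lam • a + b + v + g = 0) (hab : 0 ≤ ⟪a, b⟫)
include heq hab

theorem mul_norm_sq_add_inner_nonpos_of_smul_add_eq_zero {c : ℝ} (hc : c ≤ lam) :
    c * ‖a‖ ^ 2 + ⟪v + g, a⟫ ≤ 0 := by
  have := congrArg (⟪·, a⟫) heq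
  simp only [inner_add_left, real_inner_smul_left, real_inner_self_eq_norm_sq, inner_zero_left,
    real_inner_comm a b] at this
  rw [inner_add_left]
  nlinarith [sq_nonneg ‖a‖]

theorem norm_sq_add_inner_nonpos_of_smul_add_eq_zero (hlam : 0 ≤ lam) :
    ‖b‖ ^ 2 + ⟪v + g, b⟫ ≤ 0 := by
  have := congrArg (⟪·, b⟫) heq
  simp only [inner_add_left, real_inner_smul_left, real_inner_self_eq_norm_sq,
    inner_zero_left] at this
  rw [inner_add_left]
  nlinarith [mul_nonneg hlam hab]

end Equation

theorem IntegrableOn.continuousOn_inner {w u : ℝ → E} {a b : ℝ} (hw : ContinuousOn w (Icc a b))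
    (hu : IntegrableOn u (Icc a b)) : IntegrableOn (fun t => ⟪w t, u t⟫) (Icc a b) := by
  obtain ⟨C, hC⟩ := isCompact_Icc.exists_bound_of_continuousOn hw
  refine (hu.norm.const_mul C).mono' ((hw.aestronglyMeasurable measurableSet_Icc).inner
    hu.aestronglyMeasurable) ?_
  filter_upwards [ae_restrict_mem measurableSet_Icc] with t ht
  exact (norm_inner_le_norm _ _).trans (mul_le_mul_of_nonneg_right (hC t ht) (norm_nonneg _))

theorem inner_sub_le_integral_inner_add [CompleteSpace E] {u u' w : ℝ → E} {a b s t ε : ℝ}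
    (hu' : IntegrableOn u' (Icc a b)) (hu : ∀ t ∈ Icc a b, u t = u a + ∫ r in a..t, u' r)
    (hw : ContinuousOn w (Icc a b)) (hs : s ∈ Icc a b) (ht : t ∈ Icc a b) (hst : s ≤ t)
    (hclose : ∀ r ∈ Icc s t, ‖w t - w r‖ ≤ ε) :
    ⟪w t, u t - u s⟫ ≤ ∫ r in s..t, (⟪w r, u' r⟫ + ε * ‖u' r‖) := by
  have hu's : IntervalIntegrable u' volume s t :=
    (hu'.mono_set (uIcc_subset_Icc hs ht)).intervalIntegrable
  rw [← integral_eq_sub_of_eq_add_integral hu' hu hs ht,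
    ← show ∫ r in s..t, ⟪w t, u' r⟫ = ⟪w t, ∫ r in s..t, u' r⟫ from
      (innerSL ℝ (w t)).intervalIntegral_comp_comm hu's]
  refine integral_mono_on hst ⟨hu's.1.const_inner _, hu's.2.const_inner _⟩
    ((((IntegrableOn.continuousOn_inner hw hu').add (hu'.norm.const_mul ε)).mono_set
      (uIcc_subset_Icc hs ht)).intervalIntegrable) fun r hr => ?_
  have := (real_inner_le_norm (w t - w r) (u' r)).trans
    (mul_le_mul_of_nonneg_right (hclose r hr) (norm_nonneg _))
  rw [inner_sub_left] at this
  linarith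

theorem sub_le_integral_inner [CompleteSpace E] {F : ℝ → ℝ} {u u' w : ℝ → E} {a b : ℝ}
    (hab : a ≤ b) (hu' : IntegrableOn u' (Icc a b))
    (hu : ∀ t ∈ Icc a b, u t = u a + ∫ r in a..t, u' r) (hw : ContinuousOn w (Icc a b))
    (hF : ∀ s ∈ Icc a b, ∀ t ∈ Icc a b, s ≤ t → F t - F s ≤ ⟪w t, u t - u s⟫) :
    F b - F a ≤ ∫ t in a..b, ⟪w t, u' t⟫ := by
  have hsub : ∀ {f : ℝ → ℝ}, IntegrableOn f (Icc a b) →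
      ∀ s ∈ Icc a b, ∀ t ∈ Icc a b, IntervalIntegrable f volume s t :=
    fun hf s hs t ht => (hf.mono_set (uIcc_subset_Icc hs ht)).intervalIntegrable
  have ha : a ∈ Icc a b := ⟨le_rfl, hab⟩
  have hb : b ∈ Icc a b := ⟨hab, le_rfl⟩
  have hinner := IntegrableOn.continuousOn_inner hw hu'
  refine le_of_forall_pos_le_add fun η hη => ?_
  set C := ∫ t in a..b, ‖u' t‖
  have hC : 0 ≤ C := integral_nonneg hab fun _ _ => norm_nonneg _
  set ε := η / (C + 1)
  obtain ⟨δ, hδ, hwδ⟩ := Metric.uniformContinuousOn_iff_le.1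
    (isCompact_Icc.uniformContinuousOn_of_continuous hw) ε (by positivity)
  set g : ℝ → ℝ := fun r => ⟪w r, u' r⟫ + ε * ‖u' r‖
  have hg : IntegrableOn g (Icc a b) := hinner.add (hu'.norm.const_mul ε)
  -- `δ` is a modulus of uniform continuity of `w` for `ε`, so `F - ∫ g` decreases on steps `≤ δ`.
  have hstep : ∀ s ∈ Icc a b, ∀ t ∈ Icc a b, s ≤ t → t ≤ s + δ →
      F t - ∫ r in a..t, g r ≤ F s - ∫ r in a..s, g r := by
    intro s hs t ht hst htδ
    have := (hF s hs t ht hst).trans <| inner_sub_le_integral_inner_add hu' hu hw hs ht hst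
      fun r hr => by
        rw [← dist_eq_norm]
        exact hwδ t ht r ⟨hs.1.trans hr.1, hr.2.trans ht.2⟩
          (by rw [Real.dist_eq, abs_le]; constructor <;> linarith [hr.1, hr.2])
    rw [← integral_interval_sub_left (hsub hg a ha t ht) (hsub hg a ha s hs)] at this
    linarith
  have hmain := le_of_forall_le_of_le_add hab hδ hstep
  have hgb : ∫ r in a..b, g r = (∫ t in a..b, ⟪w t, u' t⟫) + ε * C := by
    rw [integral_add (hsub hinner a ha b hb) ((hsub hu'.norm a ha b hb).const_mul ε),
      intervalIntegral.integral_const_mul]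
  have hεC : ε * C ≤ η := by
    rw [div_mul_eq_mul_div, div_le_iff₀ (by positivity)]
    nlinarith
  simp only [integral_same, sub_zero, hgb] at hmain
  linarith

namespace StrongSol

variable {φ : E → EReal} {ψ' : E → E} {lam : ℝ → ℝ} {T : ℝ} {x v x' v' : ℝ → E}

theorem continuousOn_x (sol : StrongSol φ ψ' lam T x v x' v') : ContinuousOn x (Icc 0 T) :=
  continuousOn_of_eq_add_integral sol.xint sol.xrep

theorem continuousOn_v (sol : StrongSol φ ψ' lam T x v x' v') : ContinuousOn v (Icc 0 T) :=
  continuousOn_of_eq_add_integral sol.vint sol.vrep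

theorem ae_inner_deriv_nonneg (sol : StrongSol φ ψ' lam T x v x' v') {z : E}
    (hbot : ∀ z, φ z ≠ ⊥) (hz : φ z ≠ ⊤) :
    ∀ᵐ t ∂volume.restrict (Icc 0 T), 0 ≤ ⟪x' t, v' t⟫ := by
  rw [← Measure.restrict_congr_set Ioo_ae_eq_Icc]
  filter_upwards [sol.xderiv, sol.vderiv, ae_restrict_mem measurableSet_Ioo] with t hx hv ht
  refine hx.inner_nonneg_of_eventually hv ?_
  filter_upwards [isOpen_Ioo.mem_nhds ht] with r hr
  exact (sol.subdiff r (Ioo_subset_Icc_self hr)).inner_sub_nonneg_s3 hbot hz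
    (sol.subdiff t (Ioo_subset_Icc_self ht))

theorem ae_eqn (sol : StrongSol φ ψ' lam T x v x' v') :
    ∀ᵐ t ∂volume.restrict (Icc 0 T), lam t • x' t + v' t + v t + ψ' (x t) = 0 := by
  rw [← Measure.restrict_congr_set Ioo_ae_eq_Icc]
  exact sol.eqn

theorem ae_mul_norm_sq_x'_add_inner_nonpos (sol : StrongSol φ ψ' lam T x v x' v') {z : E}
    (hbot : ∀ z, φ z ≠ ⊥) (hz : φ z ≠ ⊤) {c₀ : ℝ} (hlam : ∀ t ∈ Icc 0 T, c₀ ≤ lam t) :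
    ∀ᵐ t ∂volume.restrict (Icc 0 T), c₀ * ‖x' t‖ ^ 2 + ⟪v t + ψ' (x t), x' t⟫ ≤ 0 := by
  filter_upwards [sol.ae_eqn, sol.ae_inner_deriv_nonneg hbot hz,
    ae_restrict_mem measurableSet_Icc] with t heq hmono ht
  exact mul_norm_sq_add_inner_nonpos_of_smul_add_eq_zero heq hmono (hlam t ht)

theorem ae_norm_sq_v'_add_inner_nonpos (sol : StrongSol φ ψ' lam T x v x' v') {z : E}
    (hbot : ∀ z, φ z ≠ ⊥) (hz : φ z ≠ ⊤) (hlam : ∀ t ∈ Icc 0 T, 0 ≤ lam t) :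
    ∀ᵐ t ∂volume.restrict (Icc 0 T), ‖v' t‖ ^ 2 + ⟪v t + ψ' (x t), v' t⟫ ≤ 0 := by
  filter_upwards [sol.ae_eqn, sol.ae_inner_deriv_nonneg hbot hz,
    ae_restrict_mem measurableSet_Icc] with t heq hmono ht
  exact norm_sq_add_inner_nonpos_of_smul_add_eq_zero heq hmono (hlam t ht)

theorem integrableOn_norm_sq_x' (sol : StrongSol φ ψ' lam T x v x' v') {z : E}
    (hbot : ∀ z, φ z ≠ ⊥) (hz : φ z ≠ ⊤) (hψ' : Continuous ψ') {c₀ : ℝ} (hc₀ : 0 < c₀)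
    (hlam : ∀ t ∈ Icc 0 T, c₀ ≤ lam t) :
    IntegrableOn (fun t => ‖x' t‖ ^ 2) (Icc 0 T) := by
  refine IntegrableOn.norm_sq_of_ae_mul_norm_le hc₀ sol.xint
    (sol.continuousOn_v.add (hψ'.comp_continuousOn sol.continuousOn_x)) ?_
  filter_upwards [sol.ae_mul_norm_sq_x'_add_inner_nonpos hbot hz hlam] with t ht
  exact mul_norm_le_of_mul_norm_sq_add_inner_nonpos ht

theorem mul_integral_norm_sq_x'_le_Egap [CompleteSpace E] {ψ : E → ℝ}
    (sol : StrongSol φ ψ' lam T x v x' v') (hst : Standing φ ψ ψ') (hψ' : Continuous ψ')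
    (hT : 0 ≤ T) {c₀ : ℝ} (hc₀ : 0 < c₀)
    (hlam : ∀ t ∈ Icc 0 T, c₀ ≤ lam t) :
    c₀ * ∫ t in 0..T, ‖x' t‖ ^ 2 ≤ Egap φ ψ (x 0) := by
  obtain ⟨⟨hbot, ⟨z, hz⟩, -, -⟩, hψ, hgrad, hbdd⟩ := hst
  have hII : ∀ {f : ℝ → ℝ}, IntegrableOn f (Icc 0 T) → IntervalIntegrable f volume 0 T :=
    (intervalIntegrable_iff_integrableOn_Icc_of_le hT).2
  have hfin : ∀ t ∈ Icc 0 T, φ (x t) ≠ ⊤ := fun t ht => (sol.subdiff t ht).ne_top_s3 hz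
  have hp : ContinuousOn (fun t => v t + ψ' (x t)) (Icc 0 T) :=
    sol.continuousOn_v.add (hψ'.comp_continuousOn sol.continuousOn_x)
  have hchain : ((φ (x T)).toReal + ψ (x T)) - ((φ (x 0)).toReal + ψ (x 0)) ≤
      ∫ t in 0..T, ⟪v t + ψ' (x t), x' t⟫ := by
    refine sub_le_integral_inner (F := fun t => (φ (x t)).toReal + ψ (x t)) hT sol.xint sol.xrep hp
      fun s hs t ht _ => ?_
    have hφ := (sol.subdiff t ht).toReal_add_inner_le (hbot _) (hfin s hs)
    have hψ := hψ.inner_gradient_le_sub (hgrad (x t)) (x s)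
    have : ⟪v t + ψ' (x t), x t - x s⟫ = -⟪v t, x s - x t⟫ - ⟪ψ' (x t), x s - x t⟫ := by
      rw [inner_add_left, ← neg_sub (x t), inner_neg_right, inner_neg_right]; ring
    linarith
  have hdiss : c₀ * ∫ t in 0..T, ‖x' t‖ ^ 2 ≤ -∫ t in 0..T, ⟪v t + ψ' (x t), x' t⟫ := by
    rw [← intervalIntegral.integral_const_mul, ← intervalIntegral.integral_neg]
    refine integral_mono_ae_restrict hT
      (hII ((sol.integrableOn_norm_sq_x' hbot hz hψ' hc₀ hlam).const_mul c₀))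
      (hII (IntegrableOn.continuousOn_inner hp sol.xint).neg) ?_
    filter_upwards [sol.ae_mul_norm_sq_x'_add_inner_nonpos hbot hz hlam] with t ht
    linarith
  have hgap := toReal_add_sub_le_Egap hbdd hbot (hfin 0 ⟨le_rfl, hT⟩) (hfin T ⟨hT, le_rfl⟩)
  linarith

theorem integral_norm_sq_v'_le [CompleteSpace E] (sol : StrongSol φ ψ' lam T x v x' v') {z : E}
    (hbot : ∀ z, φ z ≠ ⊥) (hz : φ z ≠ ⊤) (hψ' : Continuous ψ') (hT : 0 ≤ T)
    (hlam : ∀ t ∈ Icc 0 T, 0 ≤ lam t) :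
    ∫ t in 0..T, ‖v' t‖ ^ 2 ≤ ‖v 0‖ ^ 2 + ∫ t in 0..T, ‖ψ' (x t)‖ ^ 2 := by
  have hII : ∀ {f : ℝ → ℝ}, IntegrableOn f (Icc 0 T) → IntervalIntegrable f volume 0 T :=
    (intervalIntegrable_iff_integrableOn_Icc_of_le hT).2
  have hp : ContinuousOn (fun t => v t + ψ' (x t)) (Icc 0 T) :=
    sol.continuousOn_v.add (hψ'.comp_continuousOn sol.continuousOn_x)
  have hv'sq : IntegrableOn (fun t => ‖v' t‖ ^ 2) (Icc 0 T) := by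
    refine IntegrableOn.norm_sq_of_ae_mul_norm_le one_pos sol.vint hp ?_
    filter_upwards [sol.ae_norm_sq_v'_add_inner_nonpos hbot hz hlam] with t ht
    exact mul_norm_le_of_mul_norm_sq_add_inner_nonpos (by rwa [one_mul])
  have hvv' := IntegrableOn.continuousOn_inner sol.continuousOn_v sol.vint
  have hψx : IntegrableOn (fun t => ‖ψ' (x t)‖ ^ 2) (Icc 0 T) :=
    ((hψ'.comp_continuousOn sol.continuousOn_x).norm.pow 2).integrableOn_compact isCompact_Icc
  have hchain : ‖v T‖ ^ 2 / 2 - ‖v 0‖ ^ 2 / 2 ≤ ∫ t in 0..T, ⟪v t, v' t⟫ := by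
    refine sub_le_integral_inner (F := fun t => ‖v t‖ ^ 2 / 2) hT sol.vint sol.vrep
      sol.continuousOn_v fun s _ t _ _ => ?_
    rw [inner_sub_right, real_inner_self_eq_norm_sq]
    nlinarith [norm_sub_sq_real (v t) (v s), sq_nonneg ‖v t - v s‖]
  have hpt : ∫ t in 0..T, (‖v' t‖ ^ 2 / 2 + ⟪v t, v' t⟫) ≤ ∫ t in 0..T, ‖ψ' (x t)‖ ^ 2 / 2 := by
    refine integral_mono_ae_restrict hT (hII ((hv'sq.div_const 2).add hvv'))
      (hII (hψx.div_const 2)) ?_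
    filter_upwards [sol.ae_norm_sq_v'_add_inner_nonpos hbot hz hlam] with t ht
    exact norm_sq_div_two_add_inner_le ht
  rw [integral_add (hII (hv'sq.div_const 2)) (hII hvv'), intervalIntegral.integral_div,
    intervalIntegral.integral_div] at hpt
  nlinarith [sq_nonneg ‖v T‖]

end StrongSol

end InnerProductSpace

theorem stmt3_general (φ : H → EReal) (ψ : H → ℝ) (ψ' : H → H) (hst : Standing φ ψ ψ')
    (lam : ℝ → ℝ) (T c₀ : ℝ) (hT : 0 < T) (hc₀ : 0 < c₀)
    (hlam : ∀ t ∈ Set.Icc (0:ℝ) T, c₀ ≤ lam t)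
    (x v x' v' : ℝ → H) (x₀ v₀ : H) (hx0 : x 0 = x₀) (hv0 : v 0 = v₀)
    (sol : StrongSol φ ψ' lam T x v x' v')
    (Lψ : ℝ)
    (hlip : ∀ a b : H, ‖ψ' a - ψ' b‖ ≤ Lψ * ‖a - b‖) :
    ∫ t in (0:ℝ)..T, ‖v' t‖ ^ 2 ≤
      ‖v₀‖ ^ 2 + 2 * T * ‖ψ' x₀‖ ^ 2 + (2 * T ^ 2 * Lψ ^ 2 / c₀) * Egap φ ψ x₀ := by
  subst hx0 hv0
  obtain ⟨hbot, ⟨z, hz⟩, -, -⟩ := hst.1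
  have hψ' : Continuous ψ' :=
    (LipschitzWith.of_dist_le' (K := Lψ) fun a b => by
      simpa only [dist_eq_norm] using hlip a b).continuous
  set K := ∫ t in 0..T, ‖x' t‖ ^ 2
  have hK : K ≤ Egap φ ψ (x 0) / c₀ := by
    rw [le_div_iff₀ hc₀, mul_comm]
    exact sol.mul_integral_norm_sq_x'_le_Egap hst hψ' hT.le hc₀ hlam
  have hxK : ∀ t ∈ Icc 0 T, ‖x t - x 0‖ ^ 2 ≤ T * K := fun t ht => by
    simpa using norm_sub_sq_le_mul_integral_norm_sq sol.xint sol.xrep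
      (sol.integrableOn_norm_sq_x' hbot hz hψ' hc₀ hlam) ht
  have hψx := integral_norm_sq_comp_le hT.le sol.continuousOn_x hlip hxK
  have hv := sol.integral_norm_sq_v'_le hbot hz hψ' hT.le fun t ht => hc₀.le.trans (hlam t ht)
  have hTK := mul_le_mul_of_nonneg_left hK (by positivity : 0 ≤ 2 * T ^ 2 * Lψ ^ 2)
  rw [sub_zero] at hψx
  have hcoef : 2 * T ^ 2 * Lψ ^ 2 / c₀ * Egap φ ψ (x 0)
      = 2 * T ^ 2 * Lψ ^ 2 * (Egap φ ψ (x 0) / c₀) := by ring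
  linarith

theorem stmt3 (φ : H → EReal) (ψ : H → ℝ) (ψ' : H → H) (hst : Standing φ ψ ψ')
    (lam : ℝ → ℝ) (T c₀ : ℝ) (hT : 0 < T) (hc₀ : 0 < c₀)
    (hlam : ∀ t ∈ Set.Icc (0:ℝ) T, c₀ ≤ lam t)
    (x v x' v' : ℝ → H) (x₀ v₀ : H) (hx0 : x 0 = x₀) (hv0 : v 0 = v₀)
    (hv₀ : IsSubdiff φ x₀ v₀)
    (sol : StrongSol φ ψ' lam T x v x' v')
    (Lψ : ℝ) (hLψ : 0 ≤ Lψ)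
    (hlip : ∀ a b : H, ‖ψ' a - ψ' b‖ ≤ Lψ * ‖a - b‖) :
    ∫ t in (0:ℝ)..T, ‖v' t‖ ^ 2 ≤
      ‖v₀‖ ^ 2 + 2 * T * ‖ψ' x₀‖ ^ 2 + (2 * T ^ 2 * Lψ ^ 2 / c₀) * Egap φ ψ x₀ :=
  stmt3_general φ ψ ψ' hst lam T c₀ hT hc₀ hlam x v x' v' x₀ v₀ hx0 hv0 sol Lψ hlip
end

section
/- Let (x,v) be a strong solution on [0,T] of v ∈ ∂φ(x) and λẋ + v̇ + v + ∇ψ(x) = 0 a.e., with λ ≥ c₀ > 0. Then for almost every t, c₀‖ẋ(t)‖ ≤ ‖v(t) + ∇ψ(x(t))‖ and ‖v̇(t)‖ ≤ ‖v(t) + ∇ψ(x(t))‖. -/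
open MeasureTheory Set Filter
open scoped Topology

variable {H : Type*} [NormedAddCommGroup H] [InnerProductSpace ℝ H] [CompleteSpace H]

/-! The first-order condition `v ∈ ∂φ(x)` makes `t ↦ (x t, v t)` a curve in the graph of a
monotone operator, so difference quotients give `⟪v̇(t), ẋ(t)⟫ ≥ 0`. Testing the equation
`λ ẋ + v̇ = -(v + ∇ψ(x))` against `ẋ` and against `v̇`, dropping this cross term and applying
Cauchy–Schwarz yields both bounds. -/

omit [CompleteSpace H] in
lemma IsSubdiff.ne_top_s5 {φ : H → EReal} (htop : ∃ z, φ z ≠ ⊤) {a va : H}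
    (ha : IsSubdiff φ a va) : φ a ≠ ⊤ := by
  obtain ⟨z, hz⟩ := htop
  intro hatop
  have := ha z
  rw [hatop, EReal.top_add_of_ne_bot (EReal.coe_ne_bot _), top_le_iff] at this
  exact hz this

omit [CompleteSpace H] in
lemma IsSubdiff.inner_sub_nonneg_s5 {φ : H → EReal} (hbot : ∀ z, φ z ≠ ⊥)
    (htop : ∃ z, φ z ≠ ⊤) {a b va vb : H} (ha : IsSubdiff φ a va) (hb : IsSubdiff φ b vb) :
    0 ≤ inner ℝ (vb - va) (b - a) := by
  lift φ a to ℝ using ⟨ha.ne_top_s5 htop, hbot a⟩ with ra hra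
  lift φ b to ℝ using ⟨hb.ne_top_s5 htop, hbot b⟩ with rb hrb
  have hab := ha b
  have hba := hb a
  rw [← hra, ← hrb, ← EReal.coe_add, EReal.coe_le_coe_iff] at hab hba
  rw [← neg_sub b a, inner_neg_right] at hba
  rw [inner_sub_left]
  linarith

section InnerProductSpace

variable {E : Type*} [NormedAddCommGroup E] [InnerProductSpace ℝ E]

/-- `⟪f s - f t, g s - g t⟫ / (s - t)²` tends to `⟪f', g'⟫` as `s → t⁺`. -/
lemma inner_nonneg_of_hasDerivWithinAt_Ioi {f g : ℝ → E} {f' g' : E} {t : ℝ}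
    (hf : HasDerivWithinAt f f' (Ioi t) t) (hg : HasDerivWithinAt g g' (Ioi t) t)
    (hfg : ∀ᶠ s in 𝓝[>] t, 0 ≤ inner ℝ (f s - f t) (g s - g t)) :
    0 ≤ inner ℝ f' g' := by
  have hlim : Tendsto (fun s => inner ℝ (slope f t s) (slope g t s)) (𝓝[>] t)
      (𝓝 (inner ℝ f' g')) :=
    ((hasDerivWithinAt_iff_tendsto_slope' self_notMem_Ioi).mp hf).inner
      ((hasDerivWithinAt_iff_tendsto_slope' self_notMem_Ioi).mp hg)
  refine ge_of_tendsto hlim ?_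
  filter_upwards [hfg] with s hs
  rw [slope_def_module, slope_def_module, real_inner_smul_left, real_inner_smul_right,
    ← mul_assoc]
  exact mul_nonneg (mul_self_nonneg _) hs

lemma le_of_mul_self_le_mul {r s : ℝ} (hs : 0 ≤ s) (h : r * r ≤ s * r) : r ≤ s := by
  nlinarith

lemma mul_norm_le_norm_of_smul_add_eq {a : ℝ} {p q w : E} (hqp : 0 ≤ inner ℝ q p)
    (h : a • p + q = w) : a * ‖p‖ ≤ ‖w‖ := by
  rcases le_or_gt a 0 with ha | ha
  · exact (mul_nonpos_of_nonpos_of_nonneg ha (norm_nonneg p)).trans (norm_nonneg w)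
  refine le_of_mul_self_le_mul (norm_nonneg w) ?_
  calc a * ‖p‖ * (a * ‖p‖) ≤ a * (a * ‖p‖ ^ 2 + inner ℝ q p) := by
        nlinarith [mul_nonneg ha.le hqp]
    _ = a * inner ℝ w p := by
      rw [← h, inner_add_left, real_inner_smul_left, real_inner_self_eq_norm_sq]
    _ ≤ a * (‖w‖ * ‖p‖) := by gcongr; exact real_inner_le_norm w p
    _ = ‖w‖ * (a * ‖p‖) := by ring

lemma norm_le_norm_of_smul_add_eq {a : ℝ} {p q w : E} (ha : 0 ≤ a) (hqp : 0 ≤ inner ℝ q p)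
    (h : a • p + q = w) : ‖q‖ ≤ ‖w‖ := by
  refine le_of_mul_self_le_mul (norm_nonneg w) ?_
  calc ‖q‖ * ‖q‖ ≤ a * inner ℝ q p + ‖q‖ ^ 2 := by nlinarith [mul_nonneg ha hqp]
    _ = inner ℝ w q := by
      rw [← h, inner_add_left, real_inner_smul_left, real_inner_comm, real_inner_self_eq_norm_sq]
    _ ≤ ‖w‖ * ‖q‖ := real_inner_le_norm w q

end InnerProductSpace

theorem stmt5_general (φ : H → EReal) (ψ : H → ℝ) (ψ' : H → H) (hst : Standing φ ψ ψ')
    (lam : ℝ → ℝ) (T c₀ : ℝ) (hc₀ : 0 < c₀)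
    (hlam : ∀ t ∈ Set.Icc (0:ℝ) T, c₀ ≤ lam t)
    (x v x' v' : ℝ → H)
    (sol : StrongSol φ ψ' lam T x v x' v') :
    ∀ᵐ t ∂(volume.restrict (Set.Ioo 0 T)),
      c₀ * ‖x' t‖ ≤ ‖v t + ψ' (x t)‖ ∧ ‖v' t‖ ≤ ‖v t + ψ' (x t)‖ := by
  obtain ⟨⟨hbot, htop, -⟩, -⟩ := hst
  filter_upwards [sol.xderiv, sol.vderiv, sol.eqn, ae_restrict_mem measurableSet_Ioo]
    with t hx hv heq ht
  have hIcc : ∀ᶠ s in 𝓝[>] t, s ∈ Icc 0 T :=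
    nhdsWithin_le_nhds (mem_of_superset (isOpen_Ioo.mem_nhds ht) Ioo_subset_Icc_self)
  have hvx : 0 ≤ inner ℝ (v' t) (x' t) :=
    inner_nonneg_of_hasDerivWithinAt_Ioi hv.hasDerivWithinAt hx.hasDerivWithinAt <|
      hIcc.mono fun s hs =>
        (sol.subdiff t (Ioo_subset_Icc_self ht)).inner_sub_nonneg_s5 hbot htop (sol.subdiff s hs)
  have hlamt : c₀ ≤ lam t := hlam t (Ioo_subset_Icc_self ht)
  have hsum : lam t • x' t + v' t = -(v t + ψ' (x t)) := by
    rw [add_assoc] at heq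
    exact eq_neg_of_add_eq_zero_left heq
  refine ⟨?_, ?_⟩
  · calc c₀ * ‖x' t‖ ≤ lam t * ‖x' t‖ := by gcongr
      _ ≤ ‖v t + ψ' (x t)‖ := (mul_norm_le_norm_of_smul_add_eq hvx hsum).trans_eq (norm_neg _)
  · exact (norm_le_norm_of_smul_add_eq (hc₀.le.trans hlamt) hvx hsum).trans_eq (norm_neg _)

theorem stmt5 (φ : H → EReal) (ψ : H → ℝ) (ψ' : H → H) (hst : Standing φ ψ ψ')
    (lam : ℝ → ℝ) (T c₀ : ℝ) (hT : 0 < T) (hc₀ : 0 < c₀)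
    (hlam : ∀ t ∈ Set.Icc (0:ℝ) T, c₀ ≤ lam t)
    (x v x' v' : ℝ → H) (x₀ v₀ : H) (hx0 : x 0 = x₀) (hv0 : v 0 = v₀)
    (hv₀ : IsSubdiff φ x₀ v₀)
    (sol : StrongSol φ ψ' lam T x v x' v') :
    ∀ᵐ t ∂(volume.restrict (Set.Ioo 0 T)),
      c₀ * ‖x' t‖ ≤ ‖v t + ψ' (x t)‖ ∧ ‖v' t‖ ≤ ‖v t + ψ' (x t)‖ :=
  stmt5_general φ ψ ψ' hst lam T c₀ hc₀ hlam x v x' v' sol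
end
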